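/- Let p be prime, a ∈ ℤ_p \ ℤ_{≤0}, and A_k, A^{(1)}_k the coefficients of F_a(t) and F_{a'}(t) (s-fold Pochhammer quotients to the s-th power). Define B_k = (A_k − c^{k/p} A^{(1)}_{k/p})/k for k ≥ 1, where c ∈ 1 + pℤ_p and A^{(1)}_{k/p} = 0 if p ∤ k. Then B_k ∈ ℤ_p for all k ≥ 1. -/

import Mathlib

open Classical

/-!
Write `k = p * m` and `v = v_p(k)`. Since `a + l = p * a'`, the factors `a + j` (`j < p * m`) of
`(a)_{pm}` that are not units are those with `j ≡ l (mod p)`, and they multiply to `p ^ m * (a')_m`.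
So `(a)_{pm} = p ^ m * (a')_m * U_a` with `U_a` the product of the unit factors; for `a = 1` this
reads `(pm)! = p ^ m * m! * U_1`, whence `A_{pm} * U_1 ^ s = A1_m * U_a ^ s`. Writing
`pm = p ^ v * u`, the unit factors of either product run `u` times through the units of `ℤ/p^v`,
so `U_a ≡ U_1` and hence `A_{pm} ≡ A1_m (mod p ^ v)`. Also `c ^ m ≡ 1 (mod p ^ v)` because
`p ^ (v - 1) ∣ m`, and `k` is `p ^ v` times a unit. When `p ∤ k`, `k` itself is a unit.
-/

open Finset

theorem ascPochhammer_eval_eq_prod_range {S : Type*} [CommSemiring S] (x : S) (n : ℕ) :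
    (ascPochhammer S n).eval x = ∏ j ∈ range n, (x + j) := by
  induction n with
  | zero => simp
  | succ n ih => rw [ascPochhammer_succ_eval, ih, prod_range_succ]

namespace ZMod

variable {M : Type*} [CommMonoid M] {N : ℕ} [NeZero N]

theorem prod_range_natCast_eq_prod_univ (g : ZMod N → M) : ∏ i ∈ range N, g i = ∏ y, g y :=
  prod_nbij' (↑) val (by simp) (by simp [val_lt]) (fun i hi => val_cast_of_lt (mem_range.1 hi))
    (fun y _ => natCast_zmod_val y) (fun _ _ => rfl)

theorem prod_range_mul_comp_add_natCast (g : ZMod N → M) (x : ZMod N) (u : ℕ) :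
    ∏ j ∈ range (N * u), g (x + j) = (∏ y, g y) ^ u := by
  induction u with
  | zero => simp
  | succ u ih =>
    rw [Nat.mul_succ, prod_range_add, ih, pow_succ]
    simp only [Nat.cast_add, Nat.cast_mul, natCast_self, zero_mul, zero_add]
    rw [prod_range_natCast_eq_prod_univ (fun y => g (x + y))]
    exact congrArg _ (Equiv.prod_comp (Equiv.addLeft x) g)

end ZMod

theorem pow_padicValNat_succ_dvd_pow_sub_one {R : Type*} [CommRing R] {p : ℕ} [Fact p.Prime]
    {c : R} (hc : (p : R) ∣ c - 1) (m : ℕ) : (p : R) ^ (padicValNat p m + 1) ∣ c ^ m - 1 := by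
  obtain ⟨t, ht⟩ := pow_padicValNat_dvd (p := p) (n := m)
  have h := dvd_sub_pow_of_dvd_sub hc (padicValNat p m)
  rw [one_pow] at h
  refine h.trans ?_
  simpa only [← pow_mul, ← ht, one_pow] using sub_dvd_pow_sub_pow (c ^ p ^ padicValNat p m) 1 t

namespace PadicInt

variable {p : ℕ} [hp : Fact p.Prime]

theorem isUnit_iff_not_p_dvd {z : ℤ_[p]} : IsUnit z ↔ ¬(p : ℤ_[p]) ∣ z := by
  rw [← norm_lt_one_iff_dvd, ← not_isUnit_iff, not_not]

theorem p_dvd_iff_toZMod_eq_zero {z : ℤ_[p]} : (p : ℤ_[p]) ∣ z ↔ toZMod z = 0 := by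
  rw [← RingHom.mem_ker, ker_toZMod, maximalIdeal_eq_span_p, Ideal.mem_span_singleton]

theorem isUnit_add_natCast_iff {b b' : ℤ_[p]} {l : ℕ} (hl : l < p) (hb : b + l = p * b')
    (j : ℕ) : IsUnit (b + j) ↔ j % p ≠ l := by
  have hbl : toZMod b = -l := by
    have := congrArg toZMod hb
    rw [map_add, map_mul, map_natCast, map_natCast, ZMod.natCast_self, zero_mul] at this
    exact eq_neg_of_add_eq_zero_left this
  rw [isUnit_iff_not_p_dvd, p_dvd_iff_toZMod_eq_zero, map_add, map_natCast, hbl, neg_add_eq_zero,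
    ZMod.natCast_eq_natCast_iff', Nat.mod_eq_of_lt hl, ne_comm]

theorem isUnit_toZModPow_iff {v : ℕ} (hv : v ≠ 0) {z : ℤ_[p]} :
    IsUnit (toZModPow v z) ↔ IsUnit z := by
  refine ⟨fun h => ?_, fun h => h.map _⟩
  by_contra hz
  rw [isUnit_iff_not_p_dvd, not_not] at hz
  obtain ⟨w, rfl⟩ := hz
  rw [map_mul, map_natCast] at h
  exact ZMod.prime_natCast_not_isUnit_pow hp.out (Nat.pos_of_ne_zero hv)
    (isUnit_of_mul_isUnit_left h)

noncomputable def ascPochhammerUnitPart (b : ℤ_[p]) (n : ℕ) : ℤ_[p] :=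
  ∏ j ∈ (range n).filter (fun j : ℕ => IsUnit (b + j)), (b + j)

theorem isUnit_ascPochhammerUnitPart (b : ℤ_[p]) (n : ℕ) : IsUnit (ascPochhammerUnitPart b n) :=
  IsUnit.prod_iff.2 fun _ hj => (mem_filter.1 hj).2

theorem toZModPow_ascPochhammerUnitPart {v : ℕ} (hv : v ≠ 0) (b : ℤ_[p]) (u : ℕ) :
    toZModPow v (ascPochhammerUnitPart b (p ^ v * u))
      = (∏ y : ZMod (p ^ v), if IsUnit y then y else 1) ^ u := by
  rw [ascPochhammerUnitPart, prod_filter, map_prod (toZModPow v),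
    ← ZMod.prod_range_mul_comp_add_natCast (fun y => if IsUnit y then y else 1)
      (toZModPow v b)]
  refine prod_congr rfl fun j _ => ?_
  simp only [apply_ite (toZModPow v), map_one, ← isUnit_toZModPow_iff hv, map_add, map_natCast]

theorem pow_dvd_ascPochhammerUnitPart_sub {v : ℕ} (hv : v ≠ 0) (b b' : ℤ_[p]) (u : ℕ) :
    (p : ℤ_[p]) ^ v ∣
      ascPochhammerUnitPart b (p ^ v * u) - ascPochhammerUnitPart b' (p ^ v * u) := by
  rw [← Ideal.mem_span_singleton, ← ker_toZModPow, RingHom.mem_ker, map_sub,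
    toZModPow_ascPochhammerUnitPart hv, toZModPow_ascPochhammerUnitPart hv, sub_self]

theorem ascPochhammer_eval_prime_mul {b b' : ℤ_[p]} {l : ℕ} (hl : l < p) (hb : b + l = p * b')
    (m : ℕ) : (ascPochhammer ℤ_[p] (p * m)).eval b
      = p ^ m * (ascPochhammer ℤ_[p] m).eval b' * ascPochhammerUnitPart b (p * m) := by
  have hp0 := hp.out.pos
  rw [ascPochhammer_eval_eq_prod_range, ascPochhammer_eval_eq_prod_range, ascPochhammerUnitPart,
    ← prod_filter_not_mul_prod_filter (range (p * m)) (fun j : ℕ => IsUnit (b + j)), ← card_range m,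
    ← prod_const, card_range, ← prod_mul_distrib]
  congr 1
  have hfilter : (range (p * m)).filter (fun j : ℕ => ¬IsUnit (b + j))
      = (range (p * m)).filter (fun j => j % p = l) :=
    filter_congr fun j _ => by rw [isUnit_add_natCast_iff hl hb, not_not]
  rw [hfilter]
  symm
  refine prod_nbij' (fun i => p * i + l) (· / p) ?_ ?_ ?_ ?_ ?_
  · intro i hi
    rw [mem_range] at hi
    rw [mem_filter, mem_range, Nat.mul_add_mod, Nat.mod_eq_of_lt hl]
    exact ⟨by nlinarith, rfl⟩
  · intro j hj
    rw [mem_filter, mem_range] at hj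
    exact mem_range.2 (Nat.div_lt_of_lt_mul hj.1)
  · intro i _
    simp [Nat.mul_add_div hp0, Nat.div_eq_of_lt hl]
  · intro j hj
    rw [mem_filter] at hj
    simp only [← hj.2, Nat.div_add_mod]
  · intro i _
    push_cast
    linear_combination (-1 : ℤ_[p]) * hb

theorem factorial_prime_mul (m : ℕ) :
    ((p * m).factorial : ℤ_[p])
      = (p : ℤ_[p]) ^ m * (m.factorial : ℤ_[p]) * ascPochhammerUnitPart 1 (p * m) := by
  have hl : p - 1 < p := Nat.sub_lt hp.out.pos one_pos
  have hb : (1 : ℤ_[p]) + (p - 1 : ℕ) = p * 1 := by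
    rw [Nat.cast_sub hp.out.one_le]
    ring
  simpa using ascPochhammer_eval_prime_mul hl hb m

theorem ascPochhammer_div_factorial_prime_mul {b b' : ℤ_[p]} {l : ℕ} (hl : l < p)
    (hb : b + l = p * b') (m : ℕ) :
    (ascPochhammer ℚ_[p] (p * m)).eval (b : ℚ_[p]) / ((p * m).factorial : ℚ_[p])
        * (ascPochhammerUnitPart (1 : ℤ_[p]) (p * m) : ℚ_[p])
      = (ascPochhammer ℚ_[p] m).eval (b' : ℚ_[p]) / (m.factorial : ℚ_[p])
        * (ascPochhammerUnitPart b (p * m) : ℚ_[p]) := by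
  have hcast (x : ℤ_[p]) (n : ℕ) :
      (ascPochhammer ℚ_[p] n).eval (x : ℚ_[p]) = ((ascPochhammer ℤ_[p] n).eval x : ℤ_[p]) := by
    rw [ascPochhammer_eval₂ Coe.ringHom]
    exact Polynomial.eval₂_at_apply Coe.ringHom x
  have hfac (n : ℕ) : (n.factorial : ℚ_[p]) = ((n.factorial : ℤ_[p]) : ℚ_[p]) := rfl
  have hp0 : (p : ℚ_[p]) ≠ 0 := Nat.cast_ne_zero.2 hp.out.ne_zero
  have hU0 : (ascPochhammerUnitPart (1 : ℤ_[p]) (p * m) : ℚ_[p]) ≠ 0 :=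
    coe_ne_zero.2 (isUnit_ascPochhammerUnitPart 1 (p * m)).ne_zero
  rw [hcast, hcast, hfac, hfac, ascPochhammer_eval_prime_mul hl hb, factorial_prime_mul]
  push_cast
  field_simp

theorem pow_padicValNat_succ_dvd_coeff_sub {s : ℕ} {a a' : ℤ_[p]} {l : ℕ} (hl : l < p)
    (hla : a + l = p * a') {A A1 : ℕ → ℤ_[p]}
    (hA : ∀ k, (A k : ℚ_[p]) =
      ((ascPochhammer ℚ_[p] k).eval (a : ℚ_[p]) / (k.factorial : ℚ_[p])) ^ s)
    (hA1 : ∀ k, (A1 k : ℚ_[p]) =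
      ((ascPochhammer ℚ_[p] k).eval (a' : ℚ_[p]) / (k.factorial : ℚ_[p])) ^ s) (m : ℕ) :
    (p : ℤ_[p]) ^ (padicValNat p m + 1) ∣ A (p * m) - A1 m := by
  set Ua := ascPochhammerUnitPart a (p * m)
  set U1 := ascPochhammerUnitPart (1 : ℤ_[p]) (p * m)
  have hkey : A (p * m) * U1 ^ s = A1 m * Ua ^ s := by
    apply Subtype.coe_injective
    simp only [coe_mul, coe_pow, hA, hA1, ← mul_pow]
    exact congrArg (· ^ s) (ascPochhammer_div_factorial_prime_mul hl hla m)
  have hUa : (p : ℤ_[p]) ^ (padicValNat p m + 1) ∣ Ua ^ s - U1 ^ s := by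
    obtain ⟨t, ht⟩ := pow_padicValNat_dvd (p := p) (n := m)
    have hpm : p * m = p ^ (padicValNat p m + 1) * t := by
      rw [pow_succ, mul_comm _ p, mul_assoc, ← ht]
    refine dvd_trans ?_ (sub_dvd_pow_sub_pow Ua U1 s)
    simpa only [Ua, U1, hpm] using pow_dvd_ascPochhammerUnitPart_sub (Nat.succ_ne_zero _) a 1 t
  rw [← ((isUnit_ascPochhammerUnitPart (1 : ℤ_[p]) (p * m)).pow s).dvd_mul_right]
  have hfactor : (A (p * m) - A1 m) * U1 ^ s = A1 m * (Ua ^ s - U1 ^ s) := by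
    linear_combination hkey
  rw [hfactor]
  exact hUa.mul_left _

theorem natCast_dvd_of_pow_padicValNat_dvd {k : ℕ} (hk : k ≠ 0) {x : ℤ_[p]}
    (h : (p : ℤ_[p]) ^ padicValNat p k ∣ x) : (k : ℤ_[p]) ∣ x := by
  obtain ⟨u, hu⟩ := pow_padicValNat_dvd (p := p) (n := k)
  have hpu : ¬p ∣ u := fun ⟨w, hw⟩ =>
    pow_succ_padicValNat_not_dvd hk ⟨w, by rw [pow_succ, mul_assoc, ← hw, ← hu]⟩
  have hunit : IsUnit (u : ℤ_[p]) := by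
    rw [isUnit_iff, norm_natCast_eq_one_iff, hp.out.coprime_iff_not_dvd]
    exact hpu
  rw [hu, Nat.cast_mul, Nat.cast_pow]
  exact hunit.mul_right_dvd.2 h

end PadicInt

theorem B_coeff_mem_padicInt_general (p s : ℕ) [Fact p.Prime]
    (a a' : ℤ_[p])
    (l : ℕ) (hl : l < p) (hla : a + (l : ℤ_[p]) = (p : ℤ_[p]) * a')
    (c : ℤ_[p]) (hc : (p : ℤ_[p]) ∣ (c - 1))
    (A A1 : ℕ → ℤ_[p])
    (hA : ∀ k, (A k : ℚ_[p]) =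
      ((ascPochhammer ℚ_[p] k).eval (a : ℚ_[p]) / (k.factorial : ℚ_[p])) ^ s)
    (hA1 : ∀ k, (A1 k : ℚ_[p]) =
      ((ascPochhammer ℚ_[p] k).eval (a' : ℚ_[p]) / (k.factorial : ℚ_[p])) ^ s)
    (k : ℕ) (hk : 1 ≤ k) :
    ∃ B : ℤ_[p], (k : ℤ_[p]) * B
      = A k - (if p ∣ k then c ^ (k / p) * A1 (k / p) else 0) := by
  have hp : p.Prime := Fact.out
  suffices h : (p : ℤ_[p]) ^ padicValNat p k
      ∣ A k - (if p ∣ k then c ^ (k / p) * A1 (k / p) else 0) by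
    obtain ⟨B, hB⟩ := PadicInt.natCast_dvd_of_pow_padicValNat_dvd (by omega) h
    exact ⟨B, hB.symm⟩
  split_ifs with hpk
  · obtain ⟨m, rfl⟩ := hpk
    rw [padicValNat.mul hp.ne_zero (by rintro rfl; omega), padicValNat_self, add_comm,
      Nat.mul_div_cancel_left m hp.pos]
    have hA_congr := PadicInt.pow_padicValNat_succ_dvd_coeff_sub hl hla hA hA1 m
    have hc_congr := pow_padicValNat_succ_dvd_pow_sub_one hc m
    have hsplit : A (p * m) - c ^ m * A1 m = (A (p * m) - A1 m) - (c ^ m - 1) * A1 m := by ring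
    rw [hsplit]
    exact hA_congr.sub (hc_congr.mul_right _)
  · rw [padicValNat.eq_zero_of_not_dvd hpk, pow_zero, sub_zero]
    exact one_dvd _

/-- Integrality of the coefficients `B_k = (A_k - c^{k/p} A^{(1)}_{k/p})/k` of
`G^{(σ)}_a(t)` (part of Lemma 2.2 of the paper): for `a ∈ ℤ_p \ ℤ_{≤0}`,
`c ∈ 1 + pℤ_p`, `A_k = ((a)_k/k!)^s`, `A^{(1)}_k = ((a')_k/k!)^s` (with `a'`
the Dwork prime and the convention `A^{(1)}_{k/p} = 0` if `p ∤ k`), one has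
`B_k ∈ ℤ_p` for all `k ≥ 1`. -/
theorem B_coeff_mem_padicInt (p s : ℕ) [Fact p.Prime] (hs : 1 ≤ s)
    (a a' : ℤ_[p]) (ha : ∀ m : ℕ, a ≠ -(m : ℤ_[p]))
    (l : ℕ) (hl : l < p) (hla : a + (l : ℤ_[p]) = (p : ℤ_[p]) * a')
    (c : ℤ_[p]) (hc : (p : ℤ_[p]) ∣ (c - 1))
    (A A1 : ℕ → ℤ_[p])
    (hA : ∀ k, (A k : ℚ_[p]) =
      ((ascPochhammer ℚ_[p] k).eval (a : ℚ_[p]) / (k.factorial : ℚ_[p])) ^ s)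
    (hA1 : ∀ k, (A1 k : ℚ_[p]) =
      ((ascPochhammer ℚ_[p] k).eval (a' : ℚ_[p]) / (k.factorial : ℚ_[p])) ^ s)
    (k : ℕ) (hk : 1 ≤ k) :
    ∃ B : ℤ_[p], (k : ℤ_[p]) * B
      = A k - (if p ∣ k then c ^ (k / p) * A1 (k / p) else 0) :=
  B_coeff_mem_padicInt_general p s a a' l hl hla c hc A A1 hA hA1 k hk
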